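/- arXiv:1811.06370 — 2 statements merged into one kernel-verified Lean document; each statement's English description precedes it below -/
import Mathlib

section
/- Let g be a function analytic on the half-plane Re(z) > 0 satisfying the growth bound |g(s)| ≤ A·e^{(r+δ)|s|} there, for some constants A, r > 0 and δ > 0. Let H : (0,∞) → ℝ be a locally integrable function satisfying H(t) = t⁻¹·H(t⁻¹) for all t > 0, and suppose that for every complex s the Mellin transform ∫₀^∞ t^{s-1} H(t) dt converges and equals g(s). Fix x with 0 < x < π/r, fix z > 0, and define f(z,y) := (1/x) ∫₀^∞ (z t/(z t + 1)) · t^{-y/x + 1/x - 1} · H(t^{1/x}) dt. Then for every y with the integrals defining f(z,y) and f(z,y+x) convergent, f satisfies the functional equation f(z, y+x) + z·f(z, y) = z·g(y). -/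
/-!
With `w t = z t / (z t + 1)` and `F t = H (t ^ (1/x))`, the function `f` is
`f y = x⁻¹ 𝓜[w F]((1 - y)/x)`.
Since `w t · (t⁻¹ + z) = z`, shifting the Mellin variable by one gives
`𝓜[w F](s - 1) + z 𝓜[w F](s) = z 𝓜[F](s)`. The substitution `u = t ^ (1/x)` turns `𝓜[F]((1 - y)/x)`
into `x 𝓜[H](1 - y)`, and the modularity `H t = t⁻¹ H (t⁻¹)` makes `𝓜[H]` invariant under
`s ↦ 1 - s`, so this is `x g(y)`.
-/

open MeasureTheory Set

section Mellin

variable {E : Type*} [NormedAddCommGroup E] [NormedSpace ℂ E]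

theorem mellin_one_sub_of_modular {f : ℝ → E}
    (hf : ∀ t : ℝ, 0 < t → f t = (t : ℂ)⁻¹ • f t⁻¹) (s : ℂ) :
    mellin f (1 - s) = mellin f s := by
  have hmod : mellin f s = mellin (fun t => (t : ℂ) ^ (-1 : ℂ) • f t⁻¹) s :=
    setIntegral_congr_fun measurableSet_Ioi fun t ht => by
      simp only [Complex.cpow_neg_one, ← hf t ht]
  rw [hmod, mellin_cpow_smul, mellin_comp_inv, neg_add, neg_neg, ← sub_eq_neg_add]

theorem mellin_sub_one_add_smul_mellin_weighted {F : ℝ → E} {z : ℝ} (hz : 0 < z) {s : ℂ}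
    (h₁ : MellinConvergent (fun t => (z * t / (z * t + 1)) • F t) (s - 1))
    (h₂ : MellinConvergent (fun t => (z * t / (z * t + 1)) • F t) s) :
    mellin (fun t => (z * t / (z * t + 1)) • F t) (s - 1)
      + (z : ℂ) • mellin (fun t => (z * t / (z * t + 1)) • F t) s = (z : ℂ) • mellin F s := by
  rw [mellin, mellin, mellin, ← integral_smul, ← integral_add h₁ (h₂.fun_smul (z : ℂ)),
    ← integral_smul]
  refine setIntegral_congr_fun measurableSet_Ioi fun t (ht : 0 < t) => ?_
  have htc : (t : ℂ) ≠ 0 := Complex.ofReal_ne_zero.mpr ht.ne'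
  have hzt : (z : ℂ) * t + 1 ≠ 0 := by exact_mod_cast (by positivity : z * t + 1 ≠ 0)
  have hscalar : (t : ℂ) ^ (s - 1 - 1) * ((z * t / (z * t + 1) : ℝ) : ℂ)
      + (z : ℂ) * ((t : ℂ) ^ (s - 1) * ((z * t / (z * t + 1) : ℝ) : ℂ))
      = z * (t : ℂ) ^ (s - 1) := by
    rw [Complex.cpow_sub _ _ htc, Complex.cpow_one]
    push_cast
    field_simp
    rw [mul_div_assoc, add_comm (1 : ℂ), mul_comm (t : ℂ), div_self hzt, mul_one]
  simp only [← Complex.coe_smul, smul_smul, ← add_smul, hscalar]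

end Mellin

theorem solution_of_functional_equation_general
    (g : ℂ → ℂ)
    (H : ℝ → ℝ)
    (hH_mod : ∀ t : ℝ, 0 < t → H t = t⁻¹ * H t⁻¹)
    (hH_mellin : ∀ s : ℂ,
      (∫ t in Ioi (0 : ℝ), (t : ℂ) ^ (s - 1) * (H t : ℂ)) = g s)
    (x : ℝ) (hx : 0 < x)
    (z : ℝ) (hz : 0 < z)
    (f : ℂ → ℂ)
    (hf : ∀ y : ℂ, f y = (1 / (x : ℂ)) * ∫ t in Ioi (0 : ℝ),
      ((z * t / (z * t + 1) : ℝ) : ℂ) * (t : ℂ) ^ (-y / (x : ℂ) + 1 / (x : ℂ) - 1) *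
        (H (t ^ ((1 : ℝ) / x)) : ℂ))
    (y : ℂ)
    (hint_y : IntegrableOn (fun t : ℝ =>
      ((z * t / (z * t + 1) : ℝ) : ℂ) * (t : ℂ) ^ (-y / (x : ℂ) + 1 / (x : ℂ) - 1) *
        (H (t ^ ((1 : ℝ) / x)) : ℂ)) (Ioi 0))
    (hint_yx : IntegrableOn (fun t : ℝ =>
      ((z * t / (z * t + 1) : ℝ) : ℂ) * (t : ℂ) ^ (-(y + (x : ℂ)) / (x : ℂ) + 1 / (x : ℂ) - 1) *
        (H (t ^ ((1 : ℝ) / x)) : ℂ)) (Ioi 0)) :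
    f (y + (x : ℂ)) + (z : ℂ) * f y = (z : ℂ) * g y := by
  have hx0 : (x : ℂ) ≠ 0 := Complex.ofReal_ne_zero.mpr hx.ne'
  set F : ℝ → ℂ := fun t => H (t ^ ((1 : ℝ) / x))
  set G : ℝ → ℂ := fun t => (z * t / (z * t + 1)) • F t
  have hG : ∀ e : ℂ, (fun t : ℝ => ((z * t / (z * t + 1) : ℝ) : ℂ) * (t : ℂ) ^ (e - 1) * F t)
      = fun t : ℝ => (t : ℂ) ^ (e - 1) • G t := fun e => funext fun t => by
    simp only [G, Complex.real_smul, smul_eq_mul]; ring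
  have hs : -y / x + 1 / x = (1 - y) / x := by ring
  have hsx : -(y + x) / x + 1 / x = (1 - y) / x - 1 := by field_simp; ring
  have hf_y : f y = 1 / x * mellin G ((1 - y) / x) := by rw [hf, ← hs, mellin, ← hG]
  have hf_yx : f (y + x) = 1 / x * mellin G ((1 - y) / x - 1) := by
    rw [hf, ← hsx, mellin, ← hG]
  have hF : mellin F ((1 - y) / x) = x * g y := by
    have hH_mod' (t : ℝ) (ht : 0 < t) : (H t : ℂ) = (t : ℂ)⁻¹ • (H t⁻¹ : ℂ) := by
      rw [hH_mod t ht, smul_eq_mul]; push_cast; rfl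
    refine (mellin_comp_rpow (fun u : ℝ => (H u : ℂ)) _ (1 / x)).trans ?_
    rw [abs_of_pos (by positivity), show (1 - y) / x / ((1 / x : ℝ) : ℂ) = 1 - y by
      push_cast; field_simp, mellin_one_sub_of_modular hH_mod', one_div, inv_inv,
      ← hH_mellin y, Complex.real_smul]
    rfl
  have hG_shift : mellin G ((1 - y) / x - 1) + (z : ℂ) • mellin G ((1 - y) / x)
      = (z : ℂ) • mellin F ((1 - y) / x) :=
    mellin_sub_one_add_smul_mellin_weighted hz
      (by rw [← hsx, MellinConvergent, ← hG]; exact hint_yx)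
      (by rw [← hs, MellinConvergent, ← hG]; exact hint_y)
  calc f (y + x) + z * f y
      = 1 / x * (mellin G ((1 - y) / x - 1) + (z : ℂ) • mellin G ((1 - y) / x)) := by
        rw [hf_y, hf_yx, smul_eq_mul]; ring
    _ = z * g y := by rw [hG_shift, hF, smul_eq_mul]; field_simp

/-- A solution of the functional equation `f(z,y+x) + z·f(z,y) = z·g(y)`
given by `f(z,y) = (1/x) ∫₀^∞ (zt/(zt+1)) t^{-y/x+1/x-1} H(t^{1/x}) dt`, where `H` is a
locally integrable modular function whose Mellin transform is `g`. -/
theorem solution_of_functional_equation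
    (g : ℂ → ℂ) (A r δ : ℝ) (hA : 0 < A) (hr : 0 < r) (hδ : 0 < δ)
    (hg_anal : AnalyticOn ℂ g {w : ℂ | 0 < w.re})
    (hg_bound : ∀ s : ℂ, 0 < s.re →
      ‖g s‖ ≤ A * Real.exp ((r + δ) * ‖s‖))
    (H : ℝ → ℝ)
    (hH_loc : LocallyIntegrableOn H (Ioi 0))
    (hH_mod : ∀ t : ℝ, 0 < t → H t = t⁻¹ * H t⁻¹)
    (hH_mellin_int : ∀ s : ℂ,
      IntegrableOn (fun t : ℝ => (t : ℂ) ^ (s - 1) * (H t : ℂ)) (Ioi 0))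
    (hH_mellin : ∀ s : ℂ,
      (∫ t in Ioi (0 : ℝ), (t : ℂ) ^ (s - 1) * (H t : ℂ)) = g s)
    (x : ℝ) (hx : 0 < x) (hxr : x < Real.pi / r)
    (z : ℝ) (hz : 0 < z)
    (f : ℂ → ℂ)
    (hf : ∀ y : ℂ, f y = (1 / (x : ℂ)) * ∫ t in Ioi (0 : ℝ),
      ((z * t / (z * t + 1) : ℝ) : ℂ) * (t : ℂ) ^ (-y / (x : ℂ) + 1 / (x : ℂ) - 1) *
        (H (t ^ ((1 : ℝ) / x)) : ℂ))
    (y : ℂ)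
    (hint_y : IntegrableOn (fun t : ℝ =>
      ((z * t / (z * t + 1) : ℝ) : ℂ) * (t : ℂ) ^ (-y / (x : ℂ) + 1 / (x : ℂ) - 1) *
        (H (t ^ ((1 : ℝ) / x)) : ℂ)) (Ioi 0))
    (hint_yx : IntegrableOn (fun t : ℝ =>
      ((z * t / (z * t + 1) : ℝ) : ℂ) * (t : ℂ) ^ (-(y + (x : ℂ)) / (x : ℂ) + 1 / (x : ℂ) - 1) *
        (H (t ^ ((1 : ℝ) / x)) : ℂ)) (Ioi 0)) :
    f (y + (x : ℂ)) + (z : ℂ) * f y = (z : ℂ) * g y :=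
  solution_of_functional_equation_general g H hH_mod hH_mellin x hx z hz f hf y hint_y hint_yx
end

section
/- The function H̄(t) := 2t² ∑_{n≥1} (2π²n⁴t² − 3πn²) e^{−πn²t²}, defined for t > 0, satisfies the modularity relation H̄(t) = t⁻¹·H̄(t⁻¹) for all t > 0. -/
/-!
Write `θ(x) = ∑_{n ∈ ℤ} e^{-π n² x}` and `ϑ(t) = θ(t²)`. Poisson summation gives
`ϑ(t⁻¹) = t ϑ(t)` for `t > 0`. Differentiating this relation twice shows that
`(t² ϑ')' = 2t ϑ' + t² ϑ''` satisfies the same relation, and differentiating the theta series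
term by term identifies `(t² ϑ')'` with `2 H̄(t)`.
-/

open Real

/-- `H̄(t) = 2t² ∑_{n≥1} (2π²n⁴t² − 3πn²) e^{−πn²t²}`. -/
noncomputable def Hbar (t : ℝ) : ℝ :=
  2 * t ^ 2 * ∑' n : ℕ+, (2 * π ^ 2 * (n : ℝ) ^ 4 * t ^ 2 - 3 * π * (n : ℝ) ^ 2) *
    Real.exp (-π * (n : ℝ) ^ 2 * t ^ 2)

open Set Topology

def IsInvModular (f : ℝ → ℝ) : Prop := ∀ t, 0 < t → f t⁻¹ = t * f t

section

variable {𝕜 E : Type*} [NontriviallyNormedField 𝕜] [NormedAddCommGroup E] [NormedSpace 𝕜 E]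

lemma HasDerivAt.unique_of_eqOn {f g : 𝕜 → E} {f' g' : E} {s : Set 𝕜} {t : 𝕜}
    (hfg : EqOn f g s) (hs : s ∈ 𝓝 t) (hf : HasDerivAt f f' t) (hg : HasDerivAt g g' t) :
    f' = g' :=
  hf.unique (hg.congr_of_eventuallyEq (hfg.eventuallyEq_of_mem hs))

lemma HasDerivAt.comp_inv {f : 𝕜 → E} {f' : E} {t : 𝕜} (ht : t ≠ 0) (hf : HasDerivAt f f' t⁻¹) :
    HasDerivAt (fun s => f s⁻¹) (-(t ^ 2)⁻¹ • f') t :=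
  hf.scomp t (hasDerivAt_inv ht)

end

namespace IsInvModular

variable {F F' F'' : ℝ → ℝ}

lemma deriv_inv (hmod : IsInvModular F) (hF : ∀ t, 0 < t → HasDerivAt F (F' t) t) {t : ℝ}
    (ht : 0 < t) : F' t⁻¹ = -t ^ 2 * (F t + t * F' t) := by
  have h := HasDerivAt.unique_of_eqOn (fun s hs => hmod s hs) (Ioi_mem_nhds ht)
    ((hF _ (inv_pos.2 ht)).comp_inv ht.ne') ((hasDerivAt_id' t).mul (hF t ht))
  rw [smul_eq_mul] at h
  field_simp at h
  rw [one_div] at h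
  linear_combination -h

lemma two_mul_deriv_add_sq_mul_deriv2 (hmod : IsInvModular F)
    (hF : ∀ t, 0 < t → HasDerivAt F (F' t) t) (hF' : ∀ t, 0 < t → HasDerivAt F' (F'' t) t) :
    IsInvModular fun t => 2 * t * F' t + t ^ 2 * F'' t := by
  intro t ht
  have h := HasDerivAt.unique_of_eqOn (fun s hs => hmod.deriv_inv hF hs) (Ioi_mem_nhds ht)
    ((hF' _ (inv_pos.2 ht)).comp_inv ht.ne')
    (((hasDerivAt_pow 2 t).neg).mul ((hF t ht).add ((hasDerivAt_id' t).mul (hF' t ht))))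
  simp only [Pi.neg_apply, smul_eq_mul] at h
  dsimp only
  rw [hmod.deriv_inv hF ht]
  field_simp at h ⊢
  simp only [one_div] at h ⊢
  linear_combination -h

end IsInvModular

noncomputable def thetaDeriv (k : ℕ) (x : ℝ) : ℝ :=
  ∑' n : ℤ, (-π * (n : ℝ) ^ 2) ^ k * rexp (-π * (n : ℝ) ^ 2 * x)

lemma summable_thetaDeriv_term (k : ℕ) {x : ℝ} (hx : 0 < x) :
    Summable fun n : ℤ => (-π * (n : ℝ) ^ 2) ^ k * rexp (-π * (n : ℝ) ^ 2 * x) := by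
  refine .of_norm_bounded
    ((summable_pow_mul_jacobiTheta₂_term_bound 0 hx (2 * k)).mul_left (π ^ k)) fun n => le_of_eq ?_
  rw [norm_mul, norm_pow, norm_mul, norm_neg, Real.norm_of_nonneg pi_pos.le, norm_pow,
    Real.norm_eq_abs, Real.norm_eq_abs, abs_of_pos (exp_pos _), Int.cast_abs, pow_mul, sq_abs]
  ring_nf

lemma hasDerivAt_thetaDeriv (k : ℕ) {x : ℝ} (hx : 0 < x) :
    HasDerivAt (thetaDeriv k) (thetaDeriv (k + 1) x) x := by
  refine hasDerivAt_tsum_of_isPreconnected (summable_thetaDeriv_term (k + 1) (half_pos hx)).norm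
    isOpen_Ioi isPreconnected_Ioi
    (g := fun (n : ℤ) y => (-π * (n : ℝ) ^ 2) ^ k * rexp (-π * (n : ℝ) ^ 2 * y))
    (g' := fun (n : ℤ) y => (-π * (n : ℝ) ^ 2) ^ (k + 1) * rexp (-π * (n : ℝ) ^ 2 * y))
    (fun n y _ => ?_) (fun n y hy => ?_) (half_lt_self hx)
    (summable_thetaDeriv_term k hx) (half_lt_self hx)
  · exact ((((hasDerivAt_id y).const_mul (-π * (n : ℝ) ^ 2)).exp).const_mul
      ((-π * (n : ℝ) ^ 2) ^ k)).congr_deriv (by simp only [id, mul_one]; ring)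
  · rw [norm_mul, norm_mul, Real.norm_of_nonneg (exp_pos _).le,
      Real.norm_of_nonneg (exp_pos _).le]
    gcongr ‖_‖ * ?_
    exact exp_le_exp.2 (by nlinarith [mul_nonneg pi_pos.le (sq_nonneg (n : ℝ)), mem_Ioi.1 hy])

lemma hasDerivAt_thetaDeriv_sq (k : ℕ) {t : ℝ} (ht : t ≠ 0) :
    HasDerivAt (fun s => thetaDeriv k (s ^ 2)) (2 * t * thetaDeriv (k + 1) (t ^ 2)) t :=
  ((hasDerivAt_thetaDeriv k (by positivity)).comp t (hasDerivAt_pow 2 t)).congr_deriv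
    (by simp only [Nat.cast_ofNat, pow_one, Nat.add_one_sub_one]; ring)

lemma isInvModular_thetaDeriv_zero_sq : IsInvModular fun t => thetaDeriv 0 (t ^ 2) := by
  intro t ht
  have hθ (x : ℝ) : thetaDeriv 0 x = ∑' n : ℤ, rexp (-π * x * (n : ℝ) ^ 2) := by
    simp only [thetaDeriv, pow_zero, one_mul, mul_right_comm]
  dsimp only
  rw [hθ, hθ, Real.tsum_exp_neg_mul_int_sq (by positivity), ← Real.sqrt_eq_rpow,
    Real.sqrt_sq (inv_pos.2 ht).le, one_div, inv_inv, inv_pow, div_inv_eq_mul]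

lemma Hbar_eq_thetaDeriv {t : ℝ} (ht : t ≠ 0) :
    Hbar t = 3 * t ^ 2 * thetaDeriv 1 (t ^ 2) + 2 * t ^ 4 * thetaDeriv 2 (t ^ 2) := by
  have hx : 0 < t ^ 2 := by positivity
  have hs₁ := (summable_thetaDeriv_term 1 hx).mul_left (3 * t ^ 2)
  have hs₂ := (summable_thetaDeriv_term 2 hx).mul_left (2 * t ^ 4)
  rw [thetaDeriv, thetaDeriv, ← tsum_mul_left, ← tsum_mul_left, ← hs₁.tsum_add hs₂,
    tsum_int_eq_zero_add_two_mul_tsum_pnat (fun n => by simp only [Int.cast_neg, neg_sq])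
      (hs₁.add hs₂), Hbar, nsmul_eq_mul, ← tsum_mul_left, ← tsum_mul_left]
  simp only [Int.cast_zero, ne_eq, OfNat.ofNat_ne_zero, not_false_eq_true, zero_pow, mul_zero,
    zero_mul, pow_one, add_zero, zero_add, Int.cast_natCast]
  refine tsum_congr fun n => ?_
  ring

lemma isInvModular_Hbar : IsInvModular Hbar := by
  have hG := isInvModular_thetaDeriv_zero_sq.two_mul_deriv_add_sq_mul_deriv2
    (F' := fun t => 2 * t * thetaDeriv 1 (t ^ 2))
    (F'' := fun t => 2 * thetaDeriv 1 (t ^ 2) + 2 * t * (2 * t * thetaDeriv 2 (t ^ 2)))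
    (fun t ht => hasDerivAt_thetaDeriv_sq 0 ht.ne')
    (fun t ht => (((hasDerivAt_id' t).const_mul 2).mul
      (hasDerivAt_thetaDeriv_sq 1 ht.ne')).congr_deriv (by ring))
  intro t ht
  rw [Hbar_eq_thetaDeriv ht.ne', Hbar_eq_thetaDeriv (inv_ne_zero ht.ne')]
  linear_combination (1 / 2 : ℝ) * hG t ht

/-- The function `H̄` satisfies the modularity relation
`H̄(t) = t⁻¹ H̄(t⁻¹)` for all `t > 0`. -/
theorem Hbar_modular (t : ℝ) (ht : 0 < t) : Hbar t = t⁻¹ * Hbar t⁻¹ := by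
  rw [isInvModular_Hbar t ht, inv_mul_cancel_left₀ ht.ne']
end
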